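/- (Theorem 1, optimality transfer) Let α be a countable type (of terminating paths), φ a PQCL formula over Σ, Lab : α → List Σ a labeling, Π a nonempty type (of policies), and for each π : Π a probability mass function p_π : PMF α. Define J(π) = ∑' a, (p_π a).toReal * (R(Lab a, φ) : ℝ) and D(π) = ∑' a, (p_π a).toReal * (d(Lab a, φ) : ℝ). Then a policy π* maximizes J over Π (∀ π, J π ≤ J π*) if and only if π* minimizes D over Π (∀ π, D π* ≤ D π): reward-maximizing policies are exactly the policies minimizing the expected dissatisfaction score. -/
import Mathlib


inductive PQCL (A : Type*) where
  | atom : Set (List A) → PQCL A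
  | odis : PQCL A → PQCL A → PQCL A
  | pconj : PQCL A → PQCL A → PQCL A

namespace PQCL

variable {A : Type*}

/-- Optionality of a PQCL formula. -/
def opt : PQCL A → ℕ
  | atom _ => 1
  | odis φ₁ φ₂ => opt φ₁ + opt φ₂
  | pconj φ₁ φ₂ => opt φ₁ * opt φ₂

open Classical in
/-- Satisfaction degree of a word w.r.t. a PQCL formula (`none` = does not satisfy). -/
noncomputable def deg : PQCL A → List A → Option ℕ
  | atom L, w => if w ∈ L then some 1 else none
  | odis φ₁ φ₂, w =>
    match deg φ₁ w with
    | some k => some k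
    | none =>
      match deg φ₂ w with
      | some n => some (n + opt φ₁)
      | none => none
  | pconj φ₁ φ₂, w =>
    match deg φ₁ w, deg φ₂ w with
    | some i, some j => some (opt φ₂ * (i - 1) + j)
    | _, _ => none

/-- Dissatisfaction score of a word w.r.t. a PQCL formula. -/
noncomputable def dscore (w : List A) (φ : PQCL A) : ℚ :=
  match deg φ w with
  | some k => (k : ℚ) / (opt φ + 1)
  | none => 1

/-- Reward associated with a word w.r.t. a PQCL formula. -/
noncomputable def reward (w : List A) (φ : PQCL A) : ℕ :=
  match deg φ w with
  | some k => opt φ - k + 1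
  | none => 0

theorem deg_bounds (φ : PQCL A) (w : List A) {k : ℕ} (h : deg φ w = some k) :
    1 ≤ k ∧ k ≤ opt φ := by
  induction φ generalizing k with
  | atom L =>
    simp only [deg] at h
    split at h
    · simp_all [opt]
    · simp at h
  | odis φ₁ φ₂ ih₁ ih₂ =>
    simp only [deg] at h
    rcases h1 : deg φ₁ w with _ | k1 <;> rw [h1] at h
    · rcases h2 : deg φ₂ w with _ | k2 <;> rw [h2] at h
      · simp at h
      · obtain ⟨hb1, hb2⟩ := ih₂ h2
        simp only [Option.some.injEq] at h
        subst h
        simp only [opt]; omega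
    · obtain ⟨hb1, hb2⟩ := ih₁ h1
      simp only [Option.some.injEq] at h
      subst h
      simp only [opt]; omega
  | pconj φ₁ φ₂ ih₁ ih₂ =>
    simp only [deg] at h
    rcases h1 : deg φ₁ w with _ | k1 <;> rw [h1] at h
    · simp at h
    · rcases h2 : deg φ₂ w with _ | k2 <;> rw [h2] at h
      · simp at h
      · obtain ⟨ha1, ha2⟩ := ih₁ h1
        obtain ⟨hb1, hb2⟩ := ih₂ h2
        simp only [Option.some.injEq] at h
        subst h
        simp only [opt]
        constructor
        · omega
        · calc opt φ₂ * (k1 - 1) + k2 ≤ opt φ₂ * (opt φ₁ - 1) + opt φ₂ := by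
                have := Nat.mul_le_mul_left (opt φ₂) (Nat.sub_le_sub_right ha2 1)
                omega
            _ = opt φ₁ * opt φ₂ := by
                have h1' : 1 ≤ opt φ₁ := le_trans ha1 ha2
                obtain ⟨m, hm⟩ := Nat.exists_eq_add_of_le h1'
                rw [hm, Nat.add_sub_cancel_left]; ring

theorem reward_eq (φ : PQCL A) (w : List A) :
    (reward w φ : ℝ) = ((opt φ : ℝ) + 1) * (1 - ((dscore w φ : ℚ) : ℝ)) := by
  rcases h : deg φ w with _ | k
  · simp [reward, dscore, h]
  · obtain ⟨h1, h2⟩ := deg_bounds φ w h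
    simp only [reward, dscore, h]
    push_cast
    rw [Nat.cast_sub (by omega)]
    have hpos : (opt φ : ℝ) + 1 > 0 := by positivity
    field_simp
    ring

theorem dscore_nonneg (φ : PQCL A) (w : List A) : (0 : ℝ) ≤ ((dscore w φ : ℚ) : ℝ) := by
  rcases h : deg φ w with _ | k <;> simp only [dscore, h]
  · norm_num
  · push_cast; positivity

theorem dscore_le_one (φ : PQCL A) (w : List A) : ((dscore w φ : ℚ) : ℝ) ≤ 1 := by
  rcases h : deg φ w with _ | k <;> simp only [dscore, h]
  · norm_num
  · obtain ⟨h1, h2⟩ := deg_bounds φ w h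
    push_cast
    rw [div_le_one (by positivity)]
    exact_mod_cast Nat.le_succ_of_le h2

end PQCL

theorem optimality_transfer {A : Type*} {α : Type*} [Countable α]
    (φ : PQCL A) (Lab : α → List A)
    {Pol : Type*} [Nonempty Pol] (p : Pol → PMF α)
    (J D : Pol → ℝ)
    (hJ : ∀ π : Pol, J π = ∑' a : α, (p π a).toReal * (PQCL.reward (Lab a) φ : ℝ))
    (hD : ∀ π : Pol, D π = ∑' a : α, (p π a).toReal * ((PQCL.dscore (Lab a) φ : ℚ) : ℝ))
    (πstar : Pol) :
    (∀ π : Pol, J π ≤ J πstar) ↔ (∀ π : Pol, D πstar ≤ D π) := by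
  set c : ℝ := (PQCL.opt φ : ℝ) + 1 with hc
  have hcpos : 0 < c := by positivity
  have key : ∀ π : Pol, J π = c * (1 - D π) := by
    intro π
    have hsum_p : Summable (fun a : α => (p π a).toReal) := by
      apply ENNReal.summable_toReal
      rw [(p π).tsum_coe]; exact ENNReal.one_ne_top
    have hsum_pd : Summable (fun a : α => (p π a).toReal * ((PQCL.dscore (Lab a) φ : ℚ) : ℝ)) := by
      apply Summable.of_nonneg_of_le (fun a => ?_) (fun a => ?_) hsum_p
      · exact mul_nonneg ENNReal.toReal_nonneg (PQCL.dscore_nonneg _ _)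
      · exact mul_le_of_le_one_right ENNReal.toReal_nonneg (PQCL.dscore_le_one _ _)
    have htot : (∑' a : α, (p π a).toReal) = 1 := by
      rw [← ENNReal.tsum_toReal_eq (fun a => (p π).apply_ne_top a), (p π).tsum_coe,
        ENNReal.toReal_one]
    rw [hJ π, hD π]
    have heq : ∀ a : α, (p π a).toReal * (PQCL.reward (Lab a) φ : ℝ) =
        c * ((p π a).toReal - (p π a).toReal * ((PQCL.dscore (Lab a) φ : ℚ) : ℝ)) := by
      intro a
      rw [PQCL.reward_eq]
      ring
    rw [tsum_congr heq, tsum_mul_left, Summable.tsum_sub hsum_p hsum_pd, htot]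
  constructor
  · intro h π
    have := h π
    rw [key π, key πstar] at this
    nlinarith
  · intro h π
    have := h π
    rw [key π, key πstar]
    nlinarith
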